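/- arXiv:2401.01166 — 2 statements merged into one kernel-verified Lean document; each statement's English description precedes it below -/
import Mathlib

section
/- Let x₀,…,x₇ be real numbers and set X = x₀·1 + x₁·e₀e₁ + x₂·e₂e₀ + x₃·e₁e₂ + x₄·e₀e₃ + x₅·e₁e₃ + x₆·e₂e₃ + x₇·e₀e₁e₂e₃ in Cl₄. If Q₁(x) = (x₀²+x₁²+x₂²+x₃²+x₄²+x₅²+x₆²+x₇²) − 2(x₁x₆ + x₂x₅ + x₃x₄) + 2x₀x₇ ≠ 0 and Q₂(x) = (x₀²+x₁²+x₂²+x₃²+x₄²+x₅²+x₆²+x₇²) + 2(x₁x₆ + x₂x₅ + x₃x₄) − 2x₀x₇ ≠ 0, then X is a unit (X has a two-sided multiplicative inverse in Cl₄). -/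
open CliffordAlgebra

/-- The positive-definite quadratic form `Q₄(v) = v₀² + v₁² + v₂² + v₃²` on `ℝ⁴`. -/
noncomputable def Q4 : QuadraticForm ℝ (Fin 4 → ℝ) :=
  QuadraticMap.weightedSumSquares ℝ (fun _ : Fin 4 => (1 : ℝ))

/-- The generators `e i` of the Clifford algebra `Cl₄ = Cl_{4,0}`. -/
noncomputable def e (i : Fin 4) : CliffordAlgebra Q4 :=
  CliffordAlgebra.ι Q4 (Pi.single i 1)

/-!
Write `X = p + B` with `p = x₀ + x₇ I`, where `I = e₀e₁e₂e₃`, and `B` the bivector part.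
Since `I² = 1` and `I` commutes with every `eᵢeⱼ`, `p` and `B` commute, so
`(p + B)(p - B) = (p - B)(p + B) = p² - B²` and `X` is a unit as soon as `p² - B²` is.
In four dimensions `B² = -|B|² + 2(x₁x₆ + x₂x₅ + x₃x₄) I`, hence `p² - B² = α + β I` with
`α = Σ xᵢ²` and `β = 2x₀x₇ - 2(x₁x₆ + x₂x₅ + x₃x₄)`; finally
`(α + β I)(α - β I) = α² - β² = Q₁(x) Q₂(x) ≠ 0`.
-/

theorem Commute.isUnit_add_of_isUnit_mul_self_sub {R : Type*} [Ring R] {a b : R}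
    (h : Commute a b) (hu : IsUnit (a * a - b * b)) : IsUnit (a + b) := by
  have hc : Commute (a + b) (a - b) :=
    ((Commute.refl a).sub_right h).add_left (h.symm.sub_right (Commute.refl b))
  rw [h.mul_self_sub_mul_self_eq] at hu
  exact (hc.isUnit_mul_iff.mp hu).1

theorem isUnit_smul_one_add_smul_of_mul_self_eq_one {K A : Type*} [Field K] [Ring A]
    [Algebra K A] {J : A} (hJ : J * J = 1) {s t : K} (hadd : s + t ≠ 0) (hsub : s - t ≠ 0) :
    IsUnit (s • (1 : A) + t • J) := by
  refine ((Commute.one_left J).smul_left s |>.smul_right t).isUnit_add_of_isUnit_mul_self_sub ?_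
  have : s • (1 : A) * s • 1 - t • J * t • J = algebraMap K A ((s + t) * (s - t)) := by
    rw [Algebra.algebraMap_eq_smul_one, smul_mul_smul, smul_mul_smul, hJ, one_mul, ← sub_smul]
    congr 1
    ring
  rw [this]
  exact (mul_ne_zero hadd hsub).isUnit.map _

theorem Q4_apply (v : Fin 4 → ℝ) : Q4 v = ∑ i, v i * v i := by
  simp [Q4, QuadraticMap.weightedSumSquares_apply]

theorem e_mul_self (i : Fin 4) : e i * e i = 1 := by
  simp [e, ι_sq_scalar, Q4_apply, Pi.single_apply]

theorem e_mul_e_of_ne {i j : Fin 4} (h : i ≠ j) : e j * e i = -(e i * e j) := by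
  have hpolar : QuadraticMap.polar Q4 (Pi.single i 1) (Pi.single j 1) = 0 := by
    simp only [QuadraticMap.polar, Q4_apply, Pi.add_apply, add_mul, mul_add, Finset.sum_add_distrib]
    simp [Pi.single_apply, h, h.symm]
  have := ι_mul_ι_add_swap (Q := Q4) (Pi.single i 1) (Pi.single j 1)
  rw [hpolar, map_zero] at this
  exact eq_neg_of_add_eq_zero_right this

-- Oriented so that `simp` sorts right-nested products of generators by index.
theorem e_mul_e_mul_self (i : Fin 4) (a : CliffordAlgebra Q4) : e i * (e i * a) = a := by
  rw [← mul_assoc, e_mul_self, one_mul]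

theorem e_mul_e_of_lt {i j : Fin 4} (h : i < j) : e j * e i = -(e i * e j) :=
  e_mul_e_of_ne h.ne

theorem e_mul_e_mul_of_lt {i j : Fin 4} (h : i < j) (a : CliffordAlgebra Q4) :
    e j * (e i * a) = -(e i * (e j * a)) := by
  rw [← mul_assoc, e_mul_e_of_lt h, neg_mul, mul_assoc]

noncomputable def pseudoscalar : CliffordAlgebra Q4 := e 0 * e 1 * e 2 * e 3

noncomputable def bivector (b₁ b₂ b₃ b₄ b₅ b₆ : ℝ) : CliffordAlgebra Q4 :=
  b₁ • (e 0 * e 1) + b₂ • (e 2 * e 0) + b₃ • (e 1 * e 2) + b₄ • (e 0 * e 3) + b₅ • (e 1 * e 3) +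
    b₆ • (e 2 * e 3)

theorem pseudoscalar_mul_self : pseudoscalar * pseudoscalar = 1 := by
  simp (disch := decide) only [pseudoscalar, mul_assoc, e_mul_e_mul_self, e_mul_self,
    e_mul_e_mul_of_lt, neg_neg, mul_neg]

theorem e_mul_pseudoscalar (i : Fin 4) : e i * pseudoscalar = -(pseudoscalar * e i) := by
  fin_cases i <;>
  simp (disch := decide) only [Fin.reduceFinMk, pseudoscalar, mul_assoc, e_mul_e_mul_self,
    e_mul_self, e_mul_e_mul_of_lt, e_mul_e_of_lt, neg_neg, mul_neg]

theorem commute_pseudoscalar_e_mul_e (i j : Fin 4) : Commute pseudoscalar (e i * e j) := by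
  rw [Commute, SemiconjBy, mul_assoc (e i), e_mul_pseudoscalar, mul_neg, ← mul_assoc (e i),
    e_mul_pseudoscalar, neg_mul, neg_neg, mul_assoc]

theorem commute_pseudoscalar_bivector (b₁ b₂ b₃ b₄ b₅ b₆ : ℝ) :
    Commute pseudoscalar (bivector b₁ b₂ b₃ b₄ b₅ b₆) := by
  unfold bivector
  apply_rules [Commute.add_right, Commute.smul_right, commute_pseudoscalar_e_mul_e]

theorem bivector_mul_self (b₁ b₂ b₃ b₄ b₅ b₆ : ℝ) :
    bivector b₁ b₂ b₃ b₄ b₅ b₆ * bivector b₁ b₂ b₃ b₄ b₅ b₆ =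
      (-(b₁ ^ 2 + b₂ ^ 2 + b₃ ^ 2 + b₄ ^ 2 + b₅ ^ 2 + b₆ ^ 2)) • 1 +
        (2 * (b₁ * b₆ + b₂ * b₅ + b₃ * b₄)) • pseudoscalar := by
  simp (disch := decide) only [bivector, pseudoscalar, add_mul, mul_add, smul_mul_smul, mul_assoc,
    e_mul_e_mul_self, e_mul_self, e_mul_e_mul_of_lt, e_mul_e_of_lt, mul_one, neg_neg, mul_neg,
    neg_mul, smul_neg]
  module

/-- If both seminorm values `Q₁(x)` and `Q₂(x)` are nonzero, then the octonion-like
number `X = Σ xᵢ uᵢ` is a unit in `Cl₄`. -/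
theorem octonionLike_isUnit_of_seminorms_ne_zero
    (x₀ x₁ x₂ x₃ x₄ x₅ x₆ x₇ : ℝ)
    (h₁ : (x₀^2 + x₁^2 + x₂^2 + x₃^2 + x₄^2 + x₅^2 + x₆^2 + x₇^2) - 2*(x₁*x₆ + x₂*x₅ + x₃*x₄) + 2*x₀*x₇ ≠ 0)
    (h₂ : (x₀^2 + x₁^2 + x₂^2 + x₃^2 + x₄^2 + x₅^2 + x₆^2 + x₇^2) + 2*(x₁*x₆ + x₂*x₅ + x₃*x₄) - 2*x₀*x₇ ≠ 0) :
    IsUnit (x₀ • (1 : CliffordAlgebra Q4) + x₁ • (e 0 * e 1) + x₂ • (e 2 * e 0) +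
      x₃ • (e 1 * e 2) + x₄ • (e 0 * e 3) + x₅ • (e 1 * e 3) + x₆ • (e 2 * e 3) +
      x₇ • (e 0 * e 1 * e 2 * e 3)) := by
  set p : CliffordAlgebra Q4 := x₀ • 1 + x₇ • pseudoscalar
  set B := bivector x₁ x₂ x₃ x₄ x₅ x₆
  convert_to IsUnit (p + B) using 1
  · simp only [p, B, bivector, pseudoscalar]
    abel
  have hpB : Commute p B :=
    ((Commute.one_left B).smul_left x₀).add_left ((commute_pseudoscalar_bivector ..).smul_left x₇)
  have hnorm : p * p - B * B =
      (x₀^2 + x₁^2 + x₂^2 + x₃^2 + x₄^2 + x₅^2 + x₆^2 + x₇^2) • 1 +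
        (2*x₀*x₇ - 2*(x₁*x₆ + x₂*x₅ + x₃*x₄)) • pseudoscalar := by
    simp only [p, B, bivector_mul_self, add_mul, mul_add, smul_mul_smul, one_mul, mul_one,
      pseudoscalar_mul_self]
    module
  refine hpB.isUnit_add_of_isUnit_mul_self_sub ?_
  rw [hnorm]
  exact isUnit_smul_one_add_smul_of_mul_self_eq_one pseudoscalar_mul_self
    (by convert h₁ using 1; ring) (by convert h₂ using 1; ring)
end

section
/- Let s₀,…,s₁₅ be real numbers and let S_r = s₀ + s₁e₀e₁ + s₂e₀e₂ + s₃e₀e₃ + s₄e₁e₂ + s₅e₃e₁ + s₆e₂e₃ + s₇e₀e₁e₂e₃ and S_d = −s₁₅ + s₁₄e₀e₁ + s₁₃e₀e₂ + s₁₂e₀e₃ + s₁₁e₁e₂ + s₁₀e₃e₁ + s₉e₂e₃ + s₈e₀e₁e₂e₃ in the even subalgebra of Cl₄. If S_r·reverse(S_d) + S_d·reverse(S_r) = 0, then the coefficients satisfy the two scalar relations s₀s₁₅ = Σᵢ₌₁⁷ sᵢs₁₅₋ᵢ and s₀s₈ = Σᵢ₌₁⁷ sᵢs₈₊ᵢ.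 -/
/-! Sending `e i ↦ [[0, ūᵢ], [uᵢ, 0]]` with `(u₀, u₁, u₂, u₃) = (1, i, j, k)` defines an algebra
map `Cl₄ → M₂(ℍ)` under which reversion becomes the conjugate transpose. The even
elements `S_r`, `S_d` become diagonal matrices `diag(p, q)`, `diag(p', q')`, so the orthogonality
condition says `p ⊥ p'` and `q ⊥ q'` in `ℍ ≅ ℝ⁴`. The sum and the difference of these two
equations are the two relations. -/

open CliffordAlgebra

open Matrix Quaternion

section StarAntidiag

variable {R : Type*} [Ring R] [StarRing R]

def starAntidiag (a : R) : Matrix (Fin 2) (Fin 2) R := !![0, star a; a, 0]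

theorem starAntidiag_conjTranspose (a : R) : (starAntidiag a)ᴴ = starAntidiag a := by
  ext i j : 1
  fin_cases i <;> fin_cases j <;> simp [starAntidiag]

theorem starAntidiag_mul_starAntidiag (a b : R) :
    starAntidiag a * starAntidiag b = diagonal ![star a * b, a * star b] := by
  ext i j : 1
  fin_cases i <;> fin_cases j <;> simp [starAntidiag, Matrix.mul_apply]

end StarAntidiag

section QuaternionAntidiag

variable {R : Type*} [CommRing R]

def starAntidiagₗ : ℍ[R] →ₗ[R] Matrix (Fin 2) (Fin 2) ℍ[R] where
  toFun := starAntidiag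
  map_add' a b := by
    ext i j : 1
    fin_cases i <;> fin_cases j <;> simp [starAntidiag]
  map_smul' c a := by
    ext i j : 1
    fin_cases i <;> fin_cases j <;> simp [starAntidiag]

theorem starAntidiag_mul_self (a : ℍ[R]) :
    starAntidiag a * starAntidiag a = algebraMap R _ (normSq a) := by
  rw [starAntidiag_mul_starAntidiag, star_mul_self, self_mul_star, algebraMap_eq_diagonal]
  congr 1
  ext i : 1
  fin_cases i <;> rfl

end QuaternionAntidiag

theorem Quaternion.mul_star_add_mul_star_eq_zero_iff (p q : ℍ[ℝ]) :
    p * star q + q * star p = 0 ↔ inner ℝ p q = 0 := by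
  have h : q * star p = star (p * star q) := by rw [star_mul, star_star]
  rw [h, self_add_star', ← coe_zero, coe_inj, mul_eq_zero, or_iff_right two_ne_zero, inner_def]

theorem Matrix.diagonal_mul_conjTranspose_add_eq_zero_iff {n : Type*} [Fintype n] [DecidableEq n]
    (d d' : n → ℍ[ℝ]) :
    diagonal d * (diagonal d')ᴴ + diagonal d' * (diagonal d)ᴴ = 0 ↔
      ∀ i, inner ℝ (d i) (d' i) = 0 := by
  simp only [diagonal_conjTranspose, diagonal_mul_diagonal, diagonal_add, diagonal_eq_zero,
    funext_iff, Pi.star_apply, Pi.zero_apply, Quaternion.mul_star_add_mul_star_eq_zero_iff]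

noncomputable def quaternionOfTuple : (Fin 4 → ℝ) ≃ₗ[ℝ] ℍ[ℝ] :=
  (QuaternionAlgebra.linearEquivTuple _ _ _).symm

@[simp] theorem re_quaternionOfTuple (v : Fin 4 → ℝ) : (quaternionOfTuple v).re = v 0 := rfl
@[simp] theorem imI_quaternionOfTuple (v : Fin 4 → ℝ) : (quaternionOfTuple v).imI = v 1 := rfl
@[simp] theorem imJ_quaternionOfTuple (v : Fin 4 → ℝ) : (quaternionOfTuple v).imJ = v 2 := rfl
@[simp] theorem imK_quaternionOfTuple (v : Fin 4 → ℝ) : (quaternionOfTuple v).imK = v 3 := rfl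

theorem inner_quaternionOfTuple (v w : Fin 4 → ℝ) :
    inner ℝ (quaternionOfTuple v) (quaternionOfTuple w) = v ⬝ᵥ w := by
  simp [inner_def, re_mul, dotProduct, Fin.sum_univ_four]

theorem normSq_quaternionOfTuple (v : Fin 4 → ℝ) : normSq (quaternionOfTuple v) = Q4 v := by
  rw [← inner_self, inner_quaternionOfTuple]
  simp [Q4, QuadraticMap.weightedSumSquares_apply, dotProduct]

noncomputable def toQuaternionMatrix : CliffordAlgebra Q4 →ₐ[ℝ] Matrix (Fin 2) (Fin 2) ℍ[ℝ] :=
  CliffordAlgebra.lift Q4 ⟨starAntidiagₗ ∘ₗ quaternionOfTuple.toLinearMap,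
    fun v => (starAntidiag_mul_self _).trans (by rw [← normSq_quaternionOfTuple]; rfl)⟩

theorem toQuaternionMatrix_ι (v : Fin 4 → ℝ) :
    toQuaternionMatrix (ι Q4 v) = starAntidiag (quaternionOfTuple v) :=
  CliffordAlgebra.lift_ι_apply _ _ _

theorem toQuaternionMatrix_e (i : Fin 4) :
    toQuaternionMatrix (e i) = starAntidiag (quaternionOfTuple (Pi.single i 1)) :=
  toQuaternionMatrix_ι _

theorem toQuaternionMatrix_reverse (x : CliffordAlgebra Q4) :
    toQuaternionMatrix (reverse x) = (toQuaternionMatrix x)ᴴ := by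
  induction x using CliffordAlgebra.induction with
  | algebraMap r => simp [algebraMap_eq_diagonal]
  | ι v => rw [reverse_ι, toQuaternionMatrix_ι, starAntidiag_conjTranspose]
  | mul a b ha hb => simp [ha, hb, conjTranspose_mul]
  | add a b ha hb => simp [ha, hb, conjTranspose_add]

noncomputable def evenElement (c₀ c₁ c₂ c₃ c₄ c₅ c₆ c₇ : ℝ) : CliffordAlgebra Q4 :=
  c₀ • 1 + c₁ • (e 0 * e 1) + c₂ • (e 0 * e 2) + c₃ • (e 0 * e 3) + c₄ • (e 1 * e 2) +
    c₅ • (e 3 * e 1) + c₆ • (e 2 * e 3) + c₇ • (e 0 * e 1 * e 2 * e 3)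

theorem toQuaternionMatrix_evenElement (c₀ c₁ c₂ c₃ c₄ c₅ c₆ c₇ : ℝ) :
    toQuaternionMatrix (evenElement c₀ c₁ c₂ c₃ c₄ c₅ c₆ c₇) =
      diagonal ![quaternionOfTuple ![c₀ + c₇, c₁ - c₆, c₂ - c₅, c₃ - c₄],
        quaternionOfTuple ![c₀ - c₇, -(c₁ + c₆), -(c₂ + c₅), -(c₃ + c₄)]] := by
  have h : e 0 * e 1 * e 2 * e 3 = e 0 * e 1 * (e 2 * e 3) := mul_assoc _ _ _
  simp only [evenElement, h, map_add, map_smul, map_one, map_mul, toQuaternionMatrix_e,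
    starAntidiag_mul_starAntidiag, diagonal_mul_diagonal, ← diagonal_one, ← diagonal_smul,
    diagonal_add]
  congr 1
  ext i : 1
  fin_cases i <;> ext <;> simp [re_mul, imI_mul, imJ_mul, imK_mul] <;> ring

/-- The orthogonality condition `S_r·S_d† + S_d·S_r† = 0` forces the two scalar
relations `s₀s₁₅ = Σᵢ₌₁⁷ sᵢs₁₅₋ᵢ` and `s₀s₈ = Σᵢ₌₁⁷ sᵢs₈₊ᵢ` on the coefficients. -/
theorem orthogonality_coefficient_relations
    (s₀ s₁ s₂ s₃ s₄ s₅ s₆ s₇ s₈ s₉ s₁₀ s₁₁ s₁₂ s₁₃ s₁₄ s₁₅ : ℝ)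
    (Sr Sd : CliffordAlgebra Q4)
    (hSr : Sr = s₀ • (1 : CliffordAlgebra Q4) + s₁ • (e 0 * e 1) + s₂ • (e 0 * e 2) +
      s₃ • (e 0 * e 3) + s₄ • (e 1 * e 2) + s₅ • (e 3 * e 1) + s₆ • (e 2 * e 3) +
      s₇ • (e 0 * e 1 * e 2 * e 3))
    (hSd : Sd = (-s₁₅) • (1 : CliffordAlgebra Q4) + s₁₄ • (e 0 * e 1) + s₁₃ • (e 0 * e 2) +
      s₁₂ • (e 0 * e 3) + s₁₁ • (e 1 * e 2) + s₁₀ • (e 3 * e 1) + s₉ • (e 2 * e 3) +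
      s₈ • (e 0 * e 1 * e 2 * e 3))
    (h : Sr * reverse Sd + Sd * reverse Sr = 0) :
    s₀ * s₁₅ = s₁ * s₁₄ + s₂ * s₁₃ + s₃ * s₁₂ + s₄ * s₁₁ + s₅ * s₁₀ + s₆ * s₉ + s₇ * s₈ ∧
    s₀ * s₈ = s₁ * s₉ + s₂ * s₁₀ + s₃ * s₁₁ + s₄ * s₁₂ + s₅ * s₁₃ + s₆ * s₁₄ + s₇ * s₁₅ := by
  replace hSr : Sr = evenElement s₀ s₁ s₂ s₃ s₄ s₅ s₆ s₇ := hSr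
  replace hSd : Sd = evenElement (-s₁₅) s₁₄ s₁₃ s₁₂ s₁₁ s₁₀ s₉ s₈ := hSd
  have hφ := congrArg toQuaternionMatrix h
  rw [map_add, map_mul, map_mul, map_zero, toQuaternionMatrix_reverse, toQuaternionMatrix_reverse,
    hSr, hSd, toQuaternionMatrix_evenElement, toQuaternionMatrix_evenElement,
    diagonal_mul_conjTranspose_add_eq_zero_iff] at hφ
  have hp := hφ 0
  have hq := hφ 1
  simp only [cons_val_zero, cons_val_one, cons_val_fin_one, inner_quaternionOfTuple, dotProduct,
    Fin.sum_univ_four, cons_val] at hp hq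
  constructor
  · linear_combination -(hp + hq) / 2
  · linear_combination (hp - hq) / 2
end
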